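/- arXiv:2503.18608 — 4 statements merged into one kernel-verified Lean document; each statement's English description precedes it below -/
import Mathlib

section
/- Chain rule for Bayesian inversion: for kernels c : X ⤳ Y and d : Y ⤳ Z on finite (or standard Borel) spaces, and a prior π on X, the Bayesian inversion of the composite satisfies (d ∘ c)†_π = c†_π ∘ d†_{c_*π}, i.e. for all z in the support of (d∘c)_*π and all x, the posterior density of x given z under the composite equals ∫_y c†_π(dx|y) d†_{c_*π}(dy|z). -/
open Finset

/-- Pushforward of a prior along a kernel: (c_*pi)(y) = sum_x c(y|x) pi(x). -/
noncomputable def push {X Y : Type*} [Fintype X] (c : X → Y → ℝ) (π : X → ℝ) (y : Y) : ℝ :=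
  ∑ x, c x y * π x

/-- Bayesian inversion: c†_pi(x|y) = c(y|x)pi(x)/(c_*pi)(y) (0 when denominator is 0). -/
noncomputable def bayesInv {X Y : Type*} [Fintype X] (c : X → Y → ℝ) (π : X → ℝ) (y : Y) (x : X) : ℝ :=
  c x y * π x / push c π y

/-- Chapman–Kolmogorov composition: (d∘c)(z|x) = sum_y d(z|y) c(y|x). -/
noncomputable def kcomp {X Y Z : Type*} [Fintype Y] (d : Y → Z → ℝ) (c : X → Y → ℝ) (x : X) (z : Z) : ℝ :=
  ∑ y, d y z * c x y
/-- Chain rule for Bayesian inversion. -/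
theorem bayes_chain_rule {X Y Z : Type*} [Fintype X] [Fintype Y] [Fintype Z]
    (c : X → Y → ℝ) (d : Y → Z → ℝ) (π : X → ℝ)
    (hc : ∀ x y, 0 ≤ c x y) (hd : ∀ y z, 0 ≤ d y z) (hπ : ∀ x, 0 ≤ π x)
    (z : Z) (hz : 0 < push (kcomp d c) π z) (x : X) :
    bayesInv (kcomp d c) π z x
      = ∑ y, bayesInv c π y x * bayesInv d (push c π) z y := by
  have hP : ∀ y, 0 ≤ push c π y := fun y =>
    Finset.sum_nonneg fun x _ => mul_nonneg (hc x y) (hπ x)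
  have hQ : push (kcomp d c) π z = push d (push c π) z := by
    simp only [push, kcomp, Finset.sum_mul, Finset.mul_sum]
    rw [Finset.sum_comm]
    congr 1; ext y; congr 1; ext x; ring
  rw [hQ] at hz
  have key : ∀ y, bayesInv c π y x * bayesInv d (push c π) z y
      = d y z * c x y * π x / push d (push c π) z := by
    intro y
    by_cases h : push c π y = 0
    · have hzero : c x y * π x = 0 := by
        have := (Finset.sum_eq_zero_iff_of_nonneg
          (fun x _ => mul_nonneg (hc x y) (hπ x))).mp h x (Finset.mem_univ x)
        exact this
      simp [bayesInv, h, hzero, mul_assoc]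
    · simp only [bayesInv]
      field_simp
  rw [Finset.sum_congr rfl fun y _ => key y]
  simp only [bayesInv, hQ, kcomp, Finset.sum_mul, Finset.sum_div]
end

section
/- Chain rule for the relative-entropy loss of composed Bayesian lenses: given lenses (c,c') : X ⇸ Y and (d,d') : Y ⇸ Z, prior π on X, and observation z, define KL(c,c')(π,y) = D_KL(c'_π(·|y) ‖ c†_π(·|y)). Then KL of the composite lens satisfies KL((d,d')∘(c,c'))(π,z) = E_{y ∼ d'_{c_*π}(·|z)}[ KL(c,c')(π,y) ] + KL(d,d')(c_*π, z). -/
open Finset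

/-- Kullback–Leibler divergence between pmfs on a finite type. -/
noncomputable def klDiv {X : Type*} [Fintype X] (p q : X → ℝ) : ℝ :=
  ∑ x, p x * Real.log (p x / q x)

/-- Chain rule for the relative-entropy loss of composed Bayesian lenses. -/
theorem kl_chain_rule_lenses {X Y Z : Type*} [Fintype X] [Fintype Y] [Fintype Z]
    (c : X → Y → ℝ) (d : Y → Z → ℝ)
    (c' : (X → ℝ) → Y → X → ℝ) (d' : (Y → ℝ) → Z → Y → ℝ)
    (π : X → ℝ) (z : Z)
    (hc'1 : ∀ y, ∑ x, c' π y x = 1)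
    (hc'pos : ∀ y x, 0 < c' π y x) (hd'pos : ∀ y, 0 < d' (push c π) z y)
    (hcpos : ∀ y x, 0 < bayesInv c π y x) (hdpos : ∀ y, 0 < bayesInv d (push c π) z y) :
    klDiv (fun p : X × Y => c' π p.2 p.1 * d' (push c π) z p.2)
        (fun p : X × Y => bayesInv c π p.2 p.1 * bayesInv d (push c π) z p.2)
      = (∑ y, d' (push c π) z y * klDiv (c' π y) (bayesInv c π y))
        + klDiv (d' (push c π) z) (bayesInv d (push c π) z) := by
  unfold klDiv
  rw [Fintype.sum_prod_type_right]
  rw [← Finset.sum_add_distrib]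
  refine Finset.sum_congr rfl fun y _ => ?_
  simp only []
  have key : ∀ x, c' π y x * d' (push c π) z y *
      Real.log (c' π y x * d' (push c π) z y / (bayesInv c π y x * bayesInv d (push c π) z y))
      = d' (push c π) z y * (c' π y x * Real.log (c' π y x / bayesInv c π y x))
        + c' π y x * (d' (push c π) z y * Real.log (d' (push c π) z y / bayesInv d (push c π) z y)) := by
    intro x
    rw [← div_mul_div_comm, Real.log_mul (div_ne_zero (hc'pos y x).ne' (hcpos y x).ne')
      (div_ne_zero (hd'pos y).ne' (hdpos y).ne')]
    ring
  calc ∑ x, c' π y x * d' (push c π) z y *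
      Real.log (c' π y x * d' (push c π) z y / (bayesInv c π y x * bayesInv d (push c π) z y))
      = ∑ x, (d' (push c π) z y * (c' π y x * Real.log (c' π y x / bayesInv c π y x))
        + c' π y x * (d' (push c π) z y * Real.log (d' (push c π) z y / bayesInv d (push c π) z y))) := by
        exact Finset.sum_congr rfl fun x _ => key x
    _ = _ := by
        rw [Finset.sum_add_distrib, ← Finset.sum_mul, hc'1 y, one_mul, Finset.mul_sum]
end

section
/- Chain rule for generalized free energy of composed statistical games: with composite energy l^{dc}(x,y,z) = l^c(x,y) + l^d(y,z) and composite entropy H^{dc}(π,z) = E_{y∼d'_{c_*π}(·|z)}[H^c(π,y)] + H^d(c_*π,z), the composite loss F^{dc}(π,z) = E_{(x,y)}[l^{dc}(x,y,z)] − H^{dc}(π,z), where (x,y) is sampled as y ∼ d'_{c_*π}(·|z) then x ∼ c'_π(·|y), satisfies F^{dc}(π,z) = E_{y∼d'_{c_*π}(·|z)}[F^c(π,y)] + F^d(c_*π,z). -/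
open Finset

/-- Chain rule for the generalized free energy of composed statistical games. -/
theorem free_energy_chain_rule {X Y Z : Type*} [Fintype X] [Fintype Y] [Fintype Z]
    (c : X → Y → ℝ) (d : Y → Z → ℝ)
    (c' : (X → ℝ) → Y → X → ℝ) (d' : (Y → ℝ) → Z → Y → ℝ)
    (lc : X → Y → ℝ) (ld : Y → Z → ℝ)
    (Hc : (X → ℝ) → Y → ℝ) (Hd : (Y → ℝ) → Z → ℝ)
    (π : X → ℝ) (z : Z)
    (hc'1 : ∀ y, ∑ x, c' π y x = 1) :
    -- composite loss: expected composite energy minus composite entropy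
    (∑ y, ∑ x, (d' (push c π) z y * c' π y x) * (lc x y + ld y z))
      - ((∑ y, d' (push c π) z y * Hc π y) + Hd (push c π) z)
    = (∑ y, d' (push c π) z y * ((∑ x, c' π y x * lc x y) - Hc π y))
      + ((∑ y, d' (push c π) z y * ld y z) - Hd (push c π) z) := by
  have h : ∀ y, ∑ x, (d' (push c π) z y * c' π y x) * (lc x y + ld y z)
      = d' (push c π) z y * (∑ x, c' π y x * lc x y) + d' (push c π) z y * ld y z := by
    intro y
    simp only [mul_assoc, ← Finset.mul_sum, ← mul_add]
    congr 1
    simp only [mul_add, Finset.sum_add_distrib, ← Finset.sum_mul, hc'1, one_mul]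
  simp only [h, Finset.sum_add_distrib, Finset.mul_sum, mul_sub]
  rw [Finset.sum_sub_distrib]
  ring
end

section
/- Bayesian inversion of a tensor product with respect to a product prior: for kernels c : X ⤳ Y and d : X' ⤳ Y' and independent priors π on X, ρ on X', the inversion of the product kernel (c⊗d)((y,y')|(x,x')) = c(y|x)d(y'|x') with respect to π⊗ρ is the product of the inversions: (c⊗d)†_{π⊗ρ}((x,x')|(y,y')) = c†_π(x|y) · d†_ρ(x'|y'). -/
open Finset

/-- Tensor (parallel) product of kernels. -/
noncomputable def tensork {X X' Y Y' : Type*} (c : X → Y → ℝ) (d : X' → Y' → ℝ)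
    (p : X × X') (q : Y × Y') : ℝ :=
  c p.1 q.1 * d p.2 q.2

/-- Bayesian inversion of a tensor product of kernels with respect to a product
prior is the product of the inversions. -/
theorem bayesInv_tensor {X X' Y Y' : Type*} [Fintype X] [Fintype X'] [Fintype Y] [Fintype Y']
    (c : X → Y → ℝ) (d : X' → Y' → ℝ) (π : X → ℝ) (ρ : X' → ℝ)
    (y : Y) (y' : Y') (hy : 0 < push c π y) (hy' : 0 < push d ρ y')
    (x : X) (x' : X') :
    bayesInv (tensork c d) (fun p => π p.1 * ρ p.2) (y, y') (x, x')
      = bayesInv c π y x * bayesInv d ρ y' x' := by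
  have hpush : push (tensork c d) (fun p => π p.1 * ρ p.2) (y, y')
      = push c π y * push d ρ y' := by
    simp only [push, tensork, Fintype.sum_prod_type, Finset.sum_mul_sum]
    exact Finset.sum_congr rfl fun a _ => Finset.sum_congr rfl fun b _ => by ring
  simp only [bayesInv, tensork, hpush]
  field_simp
end
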